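/- arXiv:1611.02670 — 4 statements merged into one kernel-verified Lean document; each statement's English description precedes it below -/
import Mathlib

section
/- Let E be a real vector space, M a subspace, S sublinear and P superlinear on E, f₀ : M → ℝ linear, and T(x) = inf_{y ∈ E} (S(x+y) − P(y)). There exists a linear functional L on E with L|_M = f₀ and P(x) ≤ L(x) ≤ S(x) for every x ∈ E if and only if f₀(x) ≤ T(x) for every x ∈ M. -/
theorem sandwich_extension_iff {E : Type*} [AddCommGroup E] [Module ℝ E]
    (M : Submodule ℝ E) (S P : E → ℝ) (f₀ : M →ₗ[ℝ] ℝ)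
    (hSadd : ∀ x y : E, S (x + y) ≤ S x + S y)
    (hSpos : ∀ (α : ℝ), 0 < α → ∀ x : E, S (α • x) = α * S x)
    (hPadd : ∀ x y : E, P x + P y ≤ P (x + y))
    (hPpos : ∀ (α : ℝ), 0 < α → ∀ x : E, P (α • x) = α * P x) :
    (∃ L : E →ₗ[ℝ] ℝ, (∀ x : M, L x = f₀ x) ∧ ∀ x : E, P x ≤ L x ∧ L x ≤ S x) ↔
      ∀ (x : M) (y : E), f₀ x ≤ S (↑x + y) - P y := by
  have hS0 : S 0 = 0 := by
    have := hSpos 2 (by norm_num) 0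
    rw [smul_zero] at this; linarith
  have hP0 : P 0 = 0 := by
    have := hPpos 2 (by norm_num) 0
    rw [smul_zero] at this; linarith
  constructor
  · rintro ⟨L, hL, hLb⟩ x y
    have h1 := (hLb (↑x + y)).2
    have h2 := (hLb y).1
    have : L (↑x + y) = L x + L y := map_add L _ _
    rw [hL x] at this
    linarith
  · intro h
    -- P ≤ S everywhere
    have hPS : ∀ z : E, P z ≤ S z := fun z => by
      have := h 0 z
      simpa using this
    set N : E → ℝ := fun x => ⨅ y : E, (S (x + y) - P y) with hN
    have hbdd : ∀ x : E, BddBelow (Set.range fun y => S (x + y) - P y) := by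
      intro x
      refine ⟨P x, ?_⟩
      rintro _ ⟨y, rfl⟩
      have h1 := hPadd x y
      have h2 := hPS (x + y)
      simp only
      linarith
    have hNle : ∀ x y : E, N x ≤ S (x + y) - P y := fun x y => ciInf_le (hbdd x) y
    have hleN : ∀ (x : E) (c : ℝ), (∀ y, c ≤ S (x + y) - P y) → c ≤ N x :=
      fun x c hc => le_ciInf hc
    have N_add : ∀ x y : E, N (x + y) ≤ N x + N y := by
      intro x y
      have key : ∀ a b : E, N (x + y) ≤ (S (x + a) - P a) + (S (y + b) - P b) := by
        intro a b
        have h1 := hNle (x + y) (a + b)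
        have h2 : S (x + y + (a + b)) ≤ S (x + a) + S (y + b) := by
          have := hSadd (x + a) (y + b)
          have e : x + a + (y + b) = x + y + (a + b) := by abel
          rwa [e] at this
        have h3 := hPadd a b
        linarith
      have step : ∀ b : E, N (x + y) - (S (y + b) - P b) ≤ N x := by
        intro b
        apply hleN
        intro a
        have := key a b
        linarith
      have final : N (x + y) - N x ≤ N y := by
        apply hleN
        intro b
        have := step b
        linarith
      linarith
    have N_hom : ∀ c : ℝ, 0 < c → ∀ x, N (c • x) = c * N x := by
      intro c hc x
      have hterm : ∀ z : E, S (c • x + c • z) - P (c • z) = c * (S (x + z) - P z) := by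
        intro z
        rw [← smul_add, hSpos c hc, hPpos c hc]
        ring
      have le1 : c * N x ≤ N (c • x) := by
        apply hleN
        intro y
        have hy : y = c • (c⁻¹ • y) := by rw [smul_smul, mul_inv_cancel₀ hc.ne', one_smul]
        rw [hy, hterm]
        have := hNle x (c⁻¹ • y)
        nlinarith
      have le2 : N (c • x) ≤ c * N x := by
        have : N (c • x) / c ≤ N x := by
          apply hleN
          intro z
          have h1 := hNle (c • x) (c • z)
          rw [hterm] at h1
          rw [div_le_iff₀ hc] at *
          nlinarith
        calc N (c • x) = (N (c • x) / c) * c := by field_simp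
          _ ≤ N x * c := by nlinarith
          _ = c * N x := by ring
      linarith
    have hf : ∀ x : (LinearPMap.mk M f₀ : E →ₗ.[ℝ] ℝ).domain,
        (LinearPMap.mk M f₀ : E →ₗ.[ℝ] ℝ) x ≤ N x := by
      intro x
      exact le_ciInf fun y => h x y
    obtain ⟨g, hg, hgN⟩ := exists_extension_of_le_sublinear ⟨M, f₀⟩ N N_hom N_add hf
    refine ⟨g, fun x => hg x, fun x => ⟨?_, ?_⟩⟩
    · have h1 := hgN (-x)
      have h2 := hNle (-x) x
      rw [neg_add_cancel, hS0] at h2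
      have h3 : g (-x) = -g x := map_neg g x
      linarith
    · have h1 := hgN x
      have h2 := hNle x 0
      rw [add_zero, hP0] at h2
      linarith
end

section
/- Let E be a real vector space, M a subspace, S sublinear and P superlinear on E, and f₀ : M → ℝ linear with f₀(x) ≤ S(x+y) − P(y) for every x ∈ M and y ∈ E. Then there exists a linear functional L on E with L|_M = f₀ and P(x) ≤ L(x) ≤ S(x) for every x ∈ E. -/
theorem sandwich_theorem {E : Type*} [AddCommGroup E] [Module ℝ E]
    (M : Submodule ℝ E) (S P : E → ℝ) (f₀ : M →ₗ[ℝ] ℝ)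
    (hSadd : ∀ x y : E, S (x + y) ≤ S x + S y)
    (hSpos : ∀ (α : ℝ), 0 < α → ∀ x : E, S (α • x) = α * S x)
    (hPadd : ∀ x y : E, P x + P y ≤ P (x + y))
    (hPpos : ∀ (α : ℝ), 0 < α → ∀ x : E, P (α • x) = α * P x)
    (hf₀ : ∀ (x : M) (y : E), f₀ x ≤ S (↑x + y) - P y) :
    ∃ L : E →ₗ[ℝ] ℝ, (∀ x : M, L x = f₀ x) ∧ ∀ x : E, P x ≤ L x ∧ L x ≤ S x := by
  have hS0 : S 0 = 0 := by
    have := hSpos 2 (by norm_num) 0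
    rw [smul_zero] at this; linarith
  have hP0 : P 0 = 0 := by
    have := hPpos 2 (by norm_num) 0
    rw [smul_zero] at this; linarith
  set T : E → ℝ := fun x => ⨅ y : E, (S (x + y) - P y) with hT
  have hPS : ∀ y, P y ≤ S y := by
    intro y
    have := hf₀ 0 y
    simp [hP0] at this
    linarith [this]
  have hbdd : ∀ x, BddBelow (Set.range fun y => S (x + y) - P y) := by
    intro x
    refine ⟨-S (-x), ?_⟩
    rintro _ ⟨y, rfl⟩
    have h1 : S y ≤ S (x + y) + S (-x) := by
      have := hSadd (x + y) (-x)
      simpa [add_comm, add_assoc, add_left_comm] using this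
    have := hPS y
    show -S (-x) ≤ S (x + y) - P y
    linarith
  have hTle : ∀ u : E, ∀ y : E, T u ≤ S (u + y) - P y := fun u y => ciInf_le (hbdd u) y
  have hleT : ∀ u : E, ∀ c : ℝ, (∀ y, c ≤ S (u + y) - P y) → c ≤ T u := by
    intro u c h
    exact le_ciInf h
  -- T is subadditive
  have hTadd : ∀ x y : E, T (x + y) ≤ T x + T y := by
    intro x y
    have key : ∀ u v : E, T (x + y) ≤ (S (x + u) - P u) + (S (y + v) - P v) := by
      intro u v
      have h1 := hTle (x + y) (u + v)
      have h2 : S (x + y + (u + v)) ≤ S (x + u) + S (y + v) := by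
        have := hSadd (x + u) (y + v)
        have e : x + u + (y + v) = x + y + (u + v) := by abel
        rwa [e] at this
      have h3 := hPadd u v
      linarith
    have step1 : ∀ v : E, T (x + y) - (S (y + v) - P v) ≤ T x := by
      intro v
      exact hleT x _ (fun u => by linarith [key u v])
    have step2 : T (x + y) - T x ≤ T y := hleT y _ (fun v => by linarith [step1 v])
    linarith
  -- T homogeneous
  have hThalf : ∀ c : ℝ, 0 < c → ∀ x : E, T (c • x) ≤ c * T x := by
    intro c hc x
    have : ∀ z : E, T (c • x) / c ≤ S (x + z) - P z := by
      intro z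
      have h1 := hTle (c • x) (c • z)
      rw [← smul_add, hSpos c hc, hPpos c hc] at h1
      rw [div_le_iff₀ hc]
      linarith [h1]
    have := hleT x _ this
    calc T (c • x) = T (c • x) / c * c := by field_simp
      _ ≤ T x * c := by nlinarith
      _ = c * T x := mul_comm _ _
  have hThom : ∀ c : ℝ, 0 < c → ∀ x : E, T (c • x) = c * T x := by
    intro c hc x
    refine le_antisymm (hThalf c hc x) ?_
    have h := hThalf c⁻¹ (by positivity) (c • x)
    rw [inv_smul_smul₀ hc.ne' x] at h
    have : c * T x ≤ c * (c⁻¹ * T (c • x)) := by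
      exact mul_le_mul_of_nonneg_left h hc.le
    rw [← mul_assoc, mul_inv_cancel₀ hc.ne', one_mul] at this
    exact this
  -- f₀ ≤ T on M
  have hf₀T : ∀ x : (LinearPMap.mk M f₀ : E →ₗ.[ℝ] ℝ).domain,
      (LinearPMap.mk M f₀ : E →ₗ.[ℝ] ℝ) x ≤ T (x : E) :=
    fun x => hleT _ _ (fun y => hf₀ x y)
  obtain ⟨L, hL₁, hL₂⟩ := exists_extension_of_le_sublinear ⟨M, f₀⟩ T hThom hTadd hf₀T
  refine ⟨L, fun x => hL₁ x, fun x => ⟨?_, ?_⟩⟩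
  · have h1 : L (-x) ≤ T (-x) := hL₂ (-x)
    have h2 : T (-x) ≤ S (-x + x) - P x := hTle (-x) x
    rw [neg_add_cancel, hS0] at h2
    have : L (-x) = -L x := by rw [map_neg]
    linarith [h1, h2, this ▸ h1]
  · have h1 : L x ≤ T x := hL₂ x
    have h2 : T x ≤ S (x + 0) - P 0 := hTle x 0
    rw [add_zero, hP0] at h2
    linarith
end

section
/- Let M be a subspace of a real vector space E, x₀ ∉ M, f₀ linear on M, S sublinear and P superlinear on E, and suppose f₀(x) ≤ S(x+y) − P(y) for all x ∈ M and all y in the span of M and x₀. Then there exists a linear functional L on M₁ := span(M ∪ {x₀}) such that L|_M = f₀ and P(x) ≤ L(x) ≤ S(x) for every x ∈ M₁. -/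
theorem one_step_sandwich_extension {E : Type*} [AddCommGroup E] [Module ℝ E]
    (M : Submodule ℝ E) (x₀ : E) (hx₀ : x₀ ∉ M) (S P : E → ℝ) (f₀ : M →ₗ[ℝ] ℝ)
    (hSadd : ∀ x y : E, S (x + y) ≤ S x + S y)
    (hSpos : ∀ (α : ℝ), 0 < α → ∀ x : E, S (α • x) = α * S x)
    (hPadd : ∀ x y : E, P x + P y ≤ P (x + y))
    (hPpos : ∀ (α : ℝ), 0 < α → ∀ x : E, P (α • x) = α * P x)
    (hf₀ : ∀ (x : M) (y : E), y ∈ M ⊔ Submodule.span ℝ {x₀} → f₀ x ≤ S (↑x + y) - P y) :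
    ∃ L : ↥(M ⊔ Submodule.span ℝ {x₀}) →ₗ[ℝ] ℝ,
      (∀ x : M, L ⟨↑x, Submodule.mem_sup_left x.2⟩ = f₀ x) ∧
      ∀ x : ↥(M ⊔ Submodule.span ℝ {x₀}), P ↑x ≤ L x ∧ L x ≤ S ↑x := by
  have hS0 : S 0 = 0 := by
    have := hSpos 2 (by norm_num) 0
    rw [smul_zero] at this; linarith
  have hP0 : P 0 = 0 := by
    have := hPpos 2 (by norm_num) 0
    rw [smul_zero] at this; linarith
  have hx₀mem : x₀ ∈ M ⊔ Submodule.span ℝ {x₀} :=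
    Submodule.mem_sup_right (Submodule.mem_span_singleton_self x₀)
  have hfS : ∀ m : M, f₀ m ≤ S ↑m := by
    intro m
    have := hf₀ m 0 (Submodule.zero_mem _)
    rwa [add_zero, hP0, sub_zero] at this
  have hPf : ∀ m : M, P ↑m ≤ f₀ m := by
    intro m
    have := hf₀ (-m) ↑m (Submodule.mem_sup_left m.2)
    rw [map_neg] at this
    have h2 : ((-m : M) : E) + ↑m = 0 := by push_cast; abel
    rw [h2, hS0] at this; linarith
  set A : Set ℝ :=
    Set.range (fun m : M => max (P (↑m + x₀) - f₀ m) (f₀ m - S (↑m - x₀))) with hA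
  have key : ∀ m m' : M,
      max (P (↑m + x₀) - f₀ m) (f₀ m - S (↑m - x₀)) ≤
        min (S (↑m' + x₀) - f₀ m') (f₀ m' - P (↑m' - x₀)) := by
    intro m m'
    have hy1 : (↑m + x₀ : E) ∈ M ⊔ Submodule.span ℝ {x₀} :=
      Submodule.add_mem _ (Submodule.mem_sup_left m.2) hx₀mem
    have hy2 : (↑m' - x₀ : E) ∈ M ⊔ Submodule.span ℝ {x₀} :=
      Submodule.sub_mem _ (Submodule.mem_sup_left m'.2) hx₀mem
    have h1 : P (↑m + x₀) - f₀ m ≤ S (↑m' + x₀) - f₀ m' := by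
      have := hf₀ (m' - m) (↑m + x₀) hy1
      have he : ((m' - m : M) : E) + (↑m + x₀) = ↑m' + x₀ := by push_cast; abel
      rw [he, map_sub] at this; linarith
    have h2 : P (↑m + x₀) - f₀ m ≤ f₀ m' - P (↑m' - x₀) := by
      have hp := hPadd (↑m + x₀) (↑m' - x₀)
      have he : (↑m + x₀ : E) + (↑m' - x₀) = ↑(m + m') := by push_cast; abel
      rw [he] at hp
      have := hPf (m + m')
      rw [map_add] at this; linarith
    have h3 : f₀ m - S (↑m - x₀) ≤ S (↑m' + x₀) - f₀ m' := by
      have hs := hSadd (↑m - x₀) (↑m' + x₀)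
      have he : (↑m - x₀ : E) + (↑m' + x₀) = ↑(m + m') := by push_cast; abel
      rw [he] at hs
      have := hfS (m + m')
      rw [map_add] at this; linarith
    have h4 : f₀ m - S (↑m - x₀) ≤ f₀ m' - P (↑m' - x₀) := by
      have := hf₀ (m - m') (↑m' - x₀) hy2
      have he : ((m - m' : M) : E) + (↑m' - x₀) = ↑m - x₀ := by push_cast; abel
      rw [he, map_sub] at this; linarith
    simp only [le_min_iff, max_le_iff]
    exact ⟨⟨h1, h3⟩, ⟨h2, h4⟩⟩
  have hAne : A.Nonempty := ⟨_, ⟨0, rfl⟩⟩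
  have hAbdd : BddAbove A := by
    refine ⟨min (S (↑(0 : M) + x₀) - f₀ 0) (f₀ 0 - P (↑(0 : M) - x₀)), ?_⟩
    rintro r ⟨m, rfl⟩
    exact key m 0
  set c : ℝ := sSup A with hc
  have hc_ge : ∀ m : M, max (P (↑m + x₀) - f₀ m) (f₀ m - S (↑m - x₀)) ≤ c :=
    fun m => le_csSup hAbdd ⟨m, rfl⟩
  have hc_le : ∀ m' : M, c ≤ min (S (↑m' + x₀) - f₀ m') (f₀ m' - P (↑m' - x₀)) := by
    intro m'
    refine csSup_le hAne ?_
    rintro r ⟨m, rfl⟩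
    exact key m m'
  set f : E →ₗ.[ℝ] ℝ := ⟨M, f₀⟩ with hf
  have hx₀' : x₀ ∉ f.domain := hx₀
  set g := f.supSpanSingleton x₀ c hx₀' with hg
  have hL : ∀ (m : E) (hm : m ∈ M) (t : ℝ) (z : E) (hz : z ∈ g.domain),
      z = m + t • x₀ → g.toFun ⟨z, hz⟩ = f₀ ⟨m, hm⟩ + t * c := by
    rintro m hm t z hz rfl
    have := LinearPMap.supSpanSingleton_apply_mk f x₀ c hx₀' m hm t
    rw [smul_eq_mul] at this
    exact this
  refine ⟨g.toFun, ?_, ?_⟩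
  · intro x
    have h0 : (↑x : E) = ↑x + (0 : ℝ) • x₀ := by rw [zero_smul, add_zero]
    have := hL ↑x x.2 0 ↑x (Submodule.mem_sup_left x.2) h0
    exact this.trans (by simp)
  · rintro ⟨z, hz⟩
    obtain ⟨m, hm, w, hw, rfl⟩ := Submodule.mem_sup.1 hz
    obtain ⟨t, rfl⟩ := Submodule.mem_span_singleton.1 hw
    have hval : g.toFun ⟨m + t • x₀, hz⟩ = f₀ ⟨m, hm⟩ + t * c := hL m hm t _ hz rfl
    rcases lt_trichotomy t 0 with ht | ht | ht
    · -- t < 0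
      set s : ℝ := -t with hs
      have hspos : 0 < s := by rw [hs]; linarith
      set m'' : M := s⁻¹ • (⟨m, hm⟩ : M) with hm''
      have heq : (m : E) + t • x₀ = s • ((m'' : E) - x₀) := by
        rw [hm'', smul_sub, Submodule.coe_smul, smul_smul,
          mul_inv_cancel₀ hspos.ne', one_smul, hs, neg_smul, sub_neg_eq_add]
      have hfm : f₀ ⟨m, hm⟩ = s * f₀ m'' := by
        rw [hm'', map_smul, smul_eq_mul, ← mul_assoc, mul_inv_cancel₀ hspos.ne', one_mul]
      have hle := (le_min_iff.1 (hc_le m'')).2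
      have hge := (max_le_iff.1 (hc_ge m'')).2
      have hts : t * c = -(s * c) := by rw [hs]; ring
      constructor
      · refine le_trans ?_ (le_of_eq hval.symm)
        show P ((m : E) + t • x₀) ≤ f₀ ⟨m, hm⟩ + t * c
        rw [heq, hPpos s hspos]
        nlinarith [mul_le_mul_of_nonneg_left hle hspos.le, hts, hfm]
      · refine le_trans (le_of_eq hval) ?_
        show f₀ ⟨m, hm⟩ + t * c ≤ S ((m : E) + t • x₀)
        rw [heq, hSpos s hspos]
        nlinarith [mul_le_mul_of_nonneg_left hge hspos.le, hts, hfm]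
    · subst ht
      have h0 : (m : E) + (0 : ℝ) • x₀ = m := by rw [zero_smul, add_zero]
      constructor
      · refine le_trans ?_ (le_of_eq hval.symm)
        rw [zero_mul, add_zero]
        calc P ((m : E) + (0 : ℝ) • x₀) = P ((⟨m, hm⟩ : M) : E) := by rw [h0]
          _ ≤ f₀ ⟨m, hm⟩ := hPf ⟨m, hm⟩
      · refine le_trans (le_of_eq hval) ?_
        rw [zero_mul, add_zero]
        calc f₀ ⟨m, hm⟩ ≤ S ((⟨m, hm⟩ : M) : E) := hfS ⟨m, hm⟩
          _ = S ((m : E) + (0 : ℝ) • x₀) := by rw [h0]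
    · -- t > 0
      set m'' : M := t⁻¹ • (⟨m, hm⟩ : M) with hm''
      have heq : (m : E) + t • x₀ = t • ((m'' : E) + x₀) := by
        rw [hm'', smul_add, Submodule.coe_smul, smul_smul,
          mul_inv_cancel₀ ht.ne', one_smul]
      have hfm : f₀ ⟨m, hm⟩ = t * f₀ m'' := by
        rw [hm'', map_smul, smul_eq_mul, ← mul_assoc, mul_inv_cancel₀ ht.ne', one_mul]
      have hle := (le_min_iff.1 (hc_le m'')).1
      have hge := (max_le_iff.1 (hc_ge m'')).1
      constructor
      · refine le_trans ?_ (le_of_eq hval.symm)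
        show P ((m : E) + t • x₀) ≤ f₀ ⟨m, hm⟩ + t * c
        rw [heq, hPpos t ht]
        nlinarith [mul_le_mul_of_nonneg_left hge ht.le]
      · refine le_trans (le_of_eq hval) ?_
        show f₀ ⟨m, hm⟩ + t * c ≤ S ((m : E) + t • x₀)
        rw [heq, hSpos t ht]
        nlinarith [mul_le_mul_of_nonneg_left hle ht.le]
end

section
/- Let M be a subspace of a real vector space E, x₀ ∉ M, f₀ linear on M, S sublinear and P superlinear on E. Define a = sup_{y∈M}(f₀(y) − S(y−x₀)), b = inf_{y∈M}(−f₀(y) + S(y+x₀)), c = inf_{y∈M}(f₀(y) − P(y−x₀)), d = sup_{y∈M}(−f₀(y) + P(y+x₀)), and assume a ≤ b and d ≤ c. Then f₀(x) ≤ S(x+y) − P(y) for all x ∈ M and y ∈ span(M ∪ {x₀}) holds if and only if a ≤ c and d ≤ b. -/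
/-!
Write `y ∈ M ⊕ ℝx₀` as `m + t • x₀`. For `t > 0` positive homogeneity reduces the inequality
`f₀ x ≤ S (x + y) - P y` (for all `x ∈ M`) to the case `t = 1`, and for `t < 0` to `t = -1`;
after the substitution `x = u - v` those two cases say exactly that every term of the supremum
`a` (resp. `d`) lies below every term of the infimum `c` (resp. `b`). The remaining case `t = 0`
follows from `t = s → 0⁺`: subadditivity of `S` and superadditivity of `P` cost at most
`s (S x₀ - P x₀)`.
-/

open Filter Topology Set Submodule

theorem ciSup_le_ciInf_iff {α ι κ : Type*} [ConditionallyCompleteLattice α] [Nonempty ι]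
    [Nonempty κ] {f : ι → α} {g : κ → α} (hf : BddAbove (range f)) (hg : BddBelow (range g)) :
    ⨆ i, f i ≤ ⨅ j, g j ↔ ∀ i j, f i ≤ g j := by
  simp only [ciSup_le_iff hf, le_ciInf_iff hg]

section Sandwich

variable {E : Type*} [AddCommGroup E] [Module ℝ E] {M : Submodule ℝ E}

def SandwichedAt (S P : E → ℝ) (f₀ : M →ₗ[ℝ] ℝ) (y : E) : Prop :=
  ∀ x : M, f₀ x ≤ S (↑x + y) - P y

variable {S P : E → ℝ} {f₀ : M →ₗ[ℝ] ℝ}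

theorem SandwichedAt.smul (hSpos : ∀ α : ℝ, 0 < α → ∀ x : E, S (α • x) = α * S x)
    (hPpos : ∀ α : ℝ, 0 < α → ∀ x : E, P (α • x) = α * P x) {y : E}
    (h : SandwichedAt S P f₀ y) {t : ℝ} (ht : 0 < t) : SandwichedAt S P f₀ (t • y) := by
  intro x
  have hx : (x : E) + t • y = t • (↑(t⁻¹ • x) + y) := by
    simp [smul_add, smul_smul, ht.ne']
  have hscaled := mul_le_mul_of_nonneg_left (h (t⁻¹ • x)) ht.le
  rw [map_smul, smul_eq_mul, ← mul_assoc, mul_inv_cancel₀ ht.ne', one_mul, mul_sub] at hscaled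
  rwa [hx, hSpos t ht, hPpos t ht]

theorem SandwichedAt.of_forall_add_smul
    (hSadd : ∀ x y : E, S (x + y) ≤ S x + S y)
    (hSpos : ∀ α : ℝ, 0 < α → ∀ x : E, S (α • x) = α * S x)
    (hPadd : ∀ x y : E, P x + P y ≤ P (x + y))
    (hPpos : ∀ α : ℝ, 0 < α → ∀ x : E, P (α • x) = α * P x) {y z : E}
    (h : ∀ s : ℝ, 0 < s → SandwichedAt S P f₀ (y + s • z)) : SandwichedAt S P f₀ y := by
  intro x
  have hbound : ∀ s : ℝ, 0 < s → f₀ x + P y ≤ S (↑x + y) + s * (S z - P z) := by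
    intro s hs
    have hf := h s hs x
    have hS := hSadd (↑x + y) (s • z)
    have hP := hPadd y (s • z)
    rw [hSpos s hs] at hS
    rw [hPpos s hs] at hP
    rw [← add_assoc] at hf
    linarith
  have hlim : Tendsto (fun s : ℝ => S (↑x + y) + s * (S z - P z)) (𝓝[>] 0)
      (𝓝 (S (↑x + y))) := by
    have hcont : Continuous fun s : ℝ => S (↑x + y) + s * (S z - P z) := by fun_prop
    simpa using (hcont.tendsto 0).mono_left nhdsWithin_le_nhds
  have := ge_of_tendsto hlim (eventually_nhdsWithin_of_forall hbound)
  linarith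

theorem forall_sandwichedAt_add_iff (z : E) :
    (∀ m : M, SandwichedAt S P f₀ (m + z)) ↔
      ∀ u v : M, f₀ u - S (u + z) ≤ f₀ v - P (v + z) := by
  constructor
  · intro h u v
    have := h v (u - v)
    rw [map_sub, Submodule.coe_sub, ← add_assoc, sub_add_cancel] at this
    linarith
  · intro h m x
    have := h (x + m) m
    rw [map_add, coe_add, add_assoc] at this
    linarith

theorem forall_sandwichedAt_sup_span_singleton_iff
    (hSadd : ∀ x y : E, S (x + y) ≤ S x + S y)
    (hSpos : ∀ α : ℝ, 0 < α → ∀ x : E, S (α • x) = α * S x)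
    (hPadd : ∀ x y : E, P x + P y ≤ P (x + y))
    (hPpos : ∀ α : ℝ, 0 < α → ∀ x : E, P (α • x) = α * P x) (x₀ : E) :
    (∀ y ∈ M ⊔ span ℝ {x₀}, SandwichedAt S P f₀ y) ↔
      (∀ m : M, SandwichedAt S P f₀ (m + -x₀)) ∧ ∀ m : M, SandwichedAt S P f₀ (m + x₀) := by
  have hx₀_mem : x₀ ∈ M ⊔ span ℝ {x₀} := mem_sup_right (mem_span_singleton_self x₀)
  refine ⟨fun h => ⟨fun m => h _ (add_mem (mem_sup_left m.2) (neg_mem hx₀_mem)),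
    fun m => h _ (add_mem (mem_sup_left m.2) hx₀_mem)⟩, ?_⟩
  rintro ⟨hminus, hplus⟩ y hy
  obtain ⟨m, hm, _, hz, rfl⟩ := mem_sup.1 hy
  obtain ⟨t, rfl⟩ := mem_span_singleton.1 hz
  have hpos : ∀ s : ℝ, 0 < s → SandwichedAt S P f₀ (m + s • x₀) := fun s hs => by
    convert (hplus (s⁻¹ • ⟨m, hm⟩)).smul hSpos hPpos hs using 1
    simp [smul_add, smul_smul, hs.ne']
  rcases lt_trichotomy t 0 with ht | rfl | ht
  · convert (hminus ((-t)⁻¹ • ⟨m, hm⟩)).smul hSpos hPpos (neg_pos.2 ht) using 1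
    simp [smul_add, smul_smul, ht.ne]
  · simpa using SandwichedAt.of_forall_add_smul hSadd hSpos hPadd hPpos hpos
  · exact hpos t ht

end Sandwich

theorem interval_condition_iff_general {E : Type*} [AddCommGroup E] [Module ℝ E]
    (M : Submodule ℝ E) (x₀ : E) (S P : E → ℝ) (f₀ : M →ₗ[ℝ] ℝ)
    (hSadd : ∀ x y : E, S (x + y) ≤ S x + S y)
    (hSpos : ∀ (α : ℝ), 0 < α → ∀ x : E, S (α • x) = α * S x)
    (hPadd : ∀ x y : E, P x + P y ≤ P (x + y))
    (hPpos : ∀ (α : ℝ), 0 < α → ∀ x : E, P (α • x) = α * P x)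
    (ha : BddAbove (Set.range fun y : M => f₀ y - S (↑y - x₀)))
    (hb : BddBelow (Set.range fun y : M => -f₀ y + S (↑y + x₀)))
    (hc : BddBelow (Set.range fun y : M => f₀ y - P (↑y - x₀)))
    (hd : BddAbove (Set.range fun y : M => -f₀ y + P (↑y + x₀))) :
    (∀ (x : M) (y : E), y ∈ M ⊔ Submodule.span ℝ {x₀} → f₀ x ≤ S (↑x + y) - P y) ↔
      ((⨆ y : M, (f₀ y - S (↑y - x₀))) ≤ ⨅ y : M, (f₀ y - P (↑y - x₀))) ∧
        (⨆ y : M, (-f₀ y + P (↑y + x₀))) ≤ ⨅ y : M, (-f₀ y + S (↑y + x₀)) := by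
  have hswap : (∀ (x : M) (y : E), y ∈ M ⊔ span ℝ {x₀} → f₀ x ≤ S (↑x + y) - P y) ↔
      ∀ y ∈ M ⊔ span ℝ {x₀}, SandwichedAt S P f₀ y :=
    ⟨fun h y hy x => h x y hy, fun h x y hy => h y hy x⟩
  rw [hswap, forall_sandwichedAt_sup_span_singleton_iff hSadd hSpos hPadd hPpos,
    forall_sandwichedAt_add_iff, forall_sandwichedAt_add_iff,
    ciSup_le_ciInf_iff ha hc, ciSup_le_ciInf_iff hd hb]
  simp only [← sub_eq_add_neg]
  exact and_congr Iff.rfl <|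
    forall_comm.trans (forall₂_congr fun u v => by constructor <;> intro <;> linarith)

theorem interval_condition_iff {E : Type*} [AddCommGroup E] [Module ℝ E]
    (M : Submodule ℝ E) (x₀ : E) (hx₀ : x₀ ∉ M) (S P : E → ℝ) (f₀ : M →ₗ[ℝ] ℝ)
    (hSadd : ∀ x y : E, S (x + y) ≤ S x + S y)
    (hSpos : ∀ (α : ℝ), 0 < α → ∀ x : E, S (α • x) = α * S x)
    (hPadd : ∀ x y : E, P x + P y ≤ P (x + y))
    (hPpos : ∀ (α : ℝ), 0 < α → ∀ x : E, P (α • x) = α * P x)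
    (ha : BddAbove (Set.range fun y : M => f₀ y - S (↑y - x₀)))
    (hb : BddBelow (Set.range fun y : M => -f₀ y + S (↑y + x₀)))
    (hc : BddBelow (Set.range fun y : M => f₀ y - P (↑y - x₀)))
    (hd : BddAbove (Set.range fun y : M => -f₀ y + P (↑y + x₀)))
    (hab : (⨆ y : M, (f₀ y - S (↑y - x₀))) ≤ ⨅ y : M, (-f₀ y + S (↑y + x₀)))
    (hdc : (⨆ y : M, (-f₀ y + P (↑y + x₀))) ≤ ⨅ y : M, (f₀ y - P (↑y - x₀))) :
    (∀ (x : M) (y : E), y ∈ M ⊔ Submodule.span ℝ {x₀} → f₀ x ≤ S (↑x + y) - P y) ↔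
      ((⨆ y : M, (f₀ y - S (↑y - x₀))) ≤ ⨅ y : M, (f₀ y - P (↑y - x₀))) ∧
        (⨆ y : M, (-f₀ y + P (↑y + x₀))) ≤ ⨅ y : M, (-f₀ y + S (↑y + x₀)) :=
  interval_condition_iff_general M x₀ S P f₀ hSadd hSpos hPadd hPpos ha hb hc hd
end
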